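/- Consider the MIP reformulation of quantile minimization: minimizing t over x ∈ X, t ∈ ℝ, v ∈ {0,1}^N subject to M(1−vᵢ) ≥ fᵢ(x) − t for all i and Σᵢ wᵢvᵢ ≥ τ, where M ≥ max_{x∈X} max_i fᵢ(x) − min_{x∈X} min_i fᵢ(x). Its optimal value equals min_{x∈X} Q(x) where Q(x) = inf{t : Σᵢ wᵢ·1{fᵢ(x) ≤ t} ≥ τ}. -/

import Mathlib

/-!
A feasible point `(x, t, v)` of the big-`M` program forces `fᵢ(x) ≤ t` wherever `vᵢ = 1`, so the
weighted empirical distribution function of `f(x)` reaches `τ` at `t`. Conversely, if it does, then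
`t ≥ fⱼ(x)` for some `j`, so `M ≥ fᵢ(x) - t` for every `i`, and the indicator `vᵢ = 1{fᵢ(x) ≤ t}`
is feasible. The feasible values of `t` are therefore the union over `x ∈ X` of the sets whose
infima are `Q(x)`, and the infimum of a union is the infimum of the infima.
-/

open Finset

theorem csInf_biUnion_eq_csInf_image {α β : Type*} [ConditionallyCompleteLattice α]
    {s : Set β} {T : β → Set α} (hs : s.Nonempty) (hT : ∀ x ∈ s, (T x).Nonempty)
    (hbdd : BddBelow (⋃ x ∈ s, T x)) :
    sInf (⋃ x ∈ s, T x) = sInf ((fun x => sInf (T x)) '' s) := by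
  obtain ⟨L, hL⟩ := hbdd
  have hL_le : ∀ x ∈ s, L ≤ sInf (T x) := fun x hx =>
    le_csInf (hT x hx) fun t ht => hL (Set.mem_biUnion hx ht)
  have hne : (⋃ x ∈ s, T x).Nonempty := by
    obtain ⟨x, hx⟩ := hs
    obtain ⟨t, ht⟩ := hT x hx
    exact ⟨t, Set.mem_biUnion hx ht⟩
  apply le_antisymm
  · refine le_csInf (hs.image _) ?_
    rintro _ ⟨x, hx, rfl⟩
    exact csInf_le_csInf ⟨L, hL⟩ (hT x hx) (Set.subset_biUnion_of_mem hx)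
  · refine le_csInf hne fun t ht => ?_
    obtain ⟨x, hx, htx⟩ := Set.mem_iUnion₂.mp ht
    calc sInf ((fun x => sInf (T x)) '' s) ≤ sInf (T x) :=
          csInf_le ⟨L, by rintro _ ⟨y, hy, rfl⟩; exact hL_le y hy⟩ ⟨x, hx, rfl⟩
      _ ≤ t := csInf_le ⟨L, fun u hu => hL (Set.mem_biUnion hx hu)⟩ htx

section WeightedCDF

variable {ι : Type*} [Fintype ι]

noncomputable def weightedCDF (w a : ι → ℝ) (t : ℝ) : ℝ :=
  ∑ i, if a i ≤ t then w i else 0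

def IsBigMFeasible (w a : ι → ℝ) (M τ t : ℝ) (v : ι → ℝ) : Prop :=
  (∀ i, v i = 0 ∨ v i = 1) ∧ (∀ i, a i - t ≤ M * (1 - v i)) ∧ τ ≤ ∑ i, w i * v i

variable {w a : ι → ℝ} {M τ t : ℝ}

theorem weightedCDF_of_forall_le (h : ∀ i, a i ≤ t) : weightedCDF w a t = ∑ i, w i :=
  sum_congr rfl fun i _ => if_pos (h i)

theorem exists_le_weightedCDF (h : τ ≤ ∑ i, w i) : ∃ t, τ ≤ weightedCDF w a t := by
  obtain ⟨t, ht⟩ := Finite.exists_le a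
  exact ⟨t, (weightedCDF_of_forall_le ht).symm ▸ h⟩

theorem exists_le_of_le_weightedCDF (hτ : 0 < τ) (h : τ ≤ weightedCDF w a t) : ∃ i, a i ≤ t := by
  by_contra! hlt
  have : weightedCDF w a t = 0 := sum_eq_zero fun i _ => if_neg (hlt i).not_ge
  linarith

theorem IsBigMFeasible.le_weightedCDF {v : ι → ℝ} (hw : ∀ i, 0 ≤ w i)
    (hv : IsBigMFeasible w a M τ t v) : τ ≤ weightedCDF w a t := by
  obtain ⟨hbin, hcon, hτv⟩ := hv
  refine hτv.trans (sum_le_sum fun i _ => ?_)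
  rcases hbin i with h0 | h1
  · rw [h0, mul_zero]
    split_ifs <;> simp [hw i]
  · have hle : a i ≤ t := by linarith [h1 ▸ hcon i]
    rw [h1, mul_one, if_pos hle]

theorem isBigMFeasible_indicator (hτ : 0 < τ) (hM : ∀ i j, a i - a j ≤ M)
    (h : τ ≤ weightedCDF w a t) :
    IsBigMFeasible w a M τ t fun i => if a i ≤ t then 1 else 0 := by
  obtain ⟨j, hj⟩ := exists_le_of_le_weightedCDF hτ h
  refine ⟨fun i => ?_, fun i => ?_, ?_⟩
  · by_cases hi : a i ≤ t <;> simp [hi]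
  · by_cases hi : a i ≤ t
    · simp [hi]
    · simp only [hi, if_false, sub_zero, mul_one]
      linarith [hM i j]
  · refine h.trans_eq (sum_congr rfl fun i _ => ?_)
    by_cases hi : a i ≤ t <;> simp [hi]

theorem exists_isBigMFeasible_iff (hw : ∀ i, 0 ≤ w i) (hτ : 0 < τ) (hM : ∀ i j, a i - a j ≤ M) :
    (∃ v, IsBigMFeasible w a M τ t v) ↔ τ ≤ weightedCDF w a t :=
  ⟨fun ⟨_, hv⟩ => hv.le_weightedCDF hw, fun h => ⟨_, isBigMFeasible_indicator hτ hM h⟩⟩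

end WeightedCDF

theorem stmt_16_general {n N : ℕ} (X : Set (EuclideanSpace ℝ (Fin n)))
    (hXne : X.Nonempty)
    (f : Fin N → EuclideanSpace ℝ (Fin n) → ℝ)
    (w : Fin N → ℝ) (hw : ∀ i, 0 < w i) (hsum : ∑ i, w i = 1)
    (τ : ℝ) (hτ : τ ∈ Set.Ioo (0 : ℝ) 1) (M : ℝ)
    (hM : ∀ x ∈ X, ∀ x' ∈ X, ∀ i j, f i x - f j x' ≤ M) :
    sInf {t : ℝ | ∃ x ∈ X, ∃ v : Fin N → ℝ, (∀ i, v i = 0 ∨ v i = 1) ∧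
        (∀ i, f i x - t ≤ M * (1 - v i)) ∧ τ ≤ ∑ i, w i * v i} =
      sInf ((fun x => sInf {t : ℝ | τ ≤ ∑ i, if f i x ≤ t then w i else 0}) '' X) := by
  have hfeasible : {t : ℝ | ∃ x ∈ X, ∃ v : Fin N → ℝ, (∀ i, v i = 0 ∨ v i = 1) ∧
      (∀ i, f i x - t ≤ M * (1 - v i)) ∧ τ ≤ ∑ i, w i * v i} =
      ⋃ x ∈ X, {t | τ ≤ weightedCDF w (f · x) t} := by
    ext t
    simp only [Set.mem_iUnion, Set.mem_ofPred_eq, exists_prop]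
    exact exists_congr fun x => and_congr_right fun hx =>
      exists_isBigMFeasible_iff (fun i => (hw i).le) hτ.1 fun i j => hM x hx x hx i j
  rw [hfeasible]
  obtain ⟨x₀, hx₀⟩ := hXne
  obtain ⟨m, hm⟩ := (Set.finite_range fun i => f i x₀).bddBelow
  refine csInf_biUnion_eq_csInf_image ⟨x₀, hx₀⟩
    (fun _ _ => exists_le_weightedCDF (hsum ▸ hτ.2.le)) ⟨m - M, ?_⟩
  simp only [mem_lowerBounds, Set.mem_iUnion]
  rintro t ⟨x, hx, ht⟩
  obtain ⟨i, hi⟩ := exists_le_of_le_weightedCDF hτ.1 ht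
  linarith [hm ⟨i, rfl⟩, hM x₀ hx₀ x hx i i]

theorem stmt_16 {n N : ℕ} (X : Set (EuclideanSpace ℝ (Fin n))) (hX : IsCompact X)
    (hXne : X.Nonempty)
    (f : Fin N → EuclideanSpace ℝ (Fin n) → ℝ) (hf : ∀ i, ContinuousOn (f i) X)
    (w : Fin N → ℝ) (hw : ∀ i, 0 < w i) (hsum : ∑ i, w i = 1)
    (τ : ℝ) (hτ : τ ∈ Set.Ioo (0 : ℝ) 1) (M : ℝ)
    (hM : ∀ x ∈ X, ∀ x' ∈ X, ∀ i j, f i x - f j x' ≤ M) :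
    sInf {t : ℝ | ∃ x ∈ X, ∃ v : Fin N → ℝ, (∀ i, v i = 0 ∨ v i = 1) ∧
        (∀ i, f i x - t ≤ M * (1 - v i)) ∧ τ ≤ ∑ i, w i * v i} =
      sInf ((fun x => sInf {t : ℝ | τ ≤ ∑ i, if f i x ≤ t then w i else 0}) '' X) :=
  stmt_16_general X hXne f w hw hsum τ hτ M hM
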